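/- Let d : ℕ → A be admissible. Then for every n ≥ 1, the number of distinct predecessor sets of words of length n in X_d equals the number of distinct words of length n occurring in d: |P(n)| = Φ_n(d). -/

import Mathlib

namespace BetaShift

variable {A : Type*}

/-- The shift map: `(shift x) n = x (n+1)`. -/
def shift (x : ℕ → A) : ℕ → A := fun n => x (n + 1)

/-- Lexicographic order on one-sided sequences: `x = y`, or there is an index `i`
such that `x j = y j` for all `j < i` and `x i < y i`. -/
def SeqLe [LinearOrder A] (x y : ℕ → A) : Prop :=
  x = y ∨ ∃ i, (∀ j, j < i → x j = y j) ∧ x i < y i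

/-- A word `w` occurs in the sequence `x`. -/
def Occurs (w : List A) (x : ℕ → A) : Prop :=
  ∃ i : ℕ, ∀ j : Fin w.length, x (i + j) = w.get j

/-- `Complexity x n` is the number `Φ_n(x)` of distinct words of length `n` occurring in `x`. -/
noncomputable def Complexity (x : ℕ → A) (n : ℕ) : ℕ :=
  Set.ncard {w : List A | w.length = n ∧ Occurs w x}

/-- A sequence is eventually periodic if there are `p ≥ 1` and `N` with
`d (i + p) = d i` for all `i ≥ N`. -/
def EventuallyPeriodic (d : ℕ → A) : Prop :=
  ∃ p, 1 ≤ p ∧ ∃ N, ∀ i, N ≤ i → d (i + p) = d i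

/-- `(d)_k`, the `k`-letter prefix of the sequence `d`, as a word. -/
def prefixWord (d : ℕ → A) (k : ℕ) : List A := List.ofFn (fun i : Fin k => d i)

variable {m : ℕ}

/-- `d` is admissible: every shift of `d` is lexicographically ≤ `d`,
and `d` is not eventually `0`. -/
def Admissible (d : ℕ → Fin m) : Prop :=
  (∀ i, SeqLe (shift^[i] d) d) ∧ ∀ N, ∃ i, N ≤ i ∧ (d i).val ≠ 0

/-- The one-sided β-shift `X_d` determined by the admissible sequence `d`. -/
def XSet (d : ℕ → Fin m) : Set (ℕ → Fin m) :=
  {x | ∀ i, SeqLe (shift^[i] x) d}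

/-- The language of `X_d`: all words occurring in some point of `X_d`. -/
def Lang (d : ℕ → Fin m) : Set (List (Fin m)) :=
  {w | ∃ x ∈ XSet d, Occurs w x}

/-- The follower set of the word `w` in `X_d`. -/
def Fol (d : ℕ → Fin m) (w : List (Fin m)) : Set (List (Fin m)) :=
  {u | w ++ u ∈ Lang d}

/-- The predecessor set of the word `w` in `X_d`. -/
def Pred (d : ℕ → Fin m) (w : List (Fin m)) : Set (List (Fin m)) :=
  {s | s ++ w ∈ Lang d}

/-- The extender set of the word `w` in `X_d`. -/
def Ext (d : ℕ → Fin m) (w : List (Fin m)) : Set (List (Fin m) × List (Fin m)) :=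
  {p | p.1 ++ w ++ p.2 ∈ Lang d}

/-- `|F(n)|`: the number of distinct follower sets of words of length `n` in `X_d`. -/
noncomputable def FolCount (d : ℕ → Fin m) (n : ℕ) : ℕ :=
  Set.ncard {S | ∃ w ∈ Lang d, w.length = n ∧ S = Fol d w}

/-- `|P(n)|`: the number of distinct predecessor sets of words of length `n` in `X_d`. -/
noncomputable def PredCount (d : ℕ → Fin m) (n : ℕ) : ℕ :=
  Set.ncard {S | ∃ w ∈ Lang d, w.length = n ∧ S = Pred d w}

/-- `|E(n)|`: the number of distinct extender sets of words of length `n` in `X_d`. -/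
noncomputable def ExtCount (d : ℕ → Fin m) (n : ℕ) : ℕ :=
  Set.ncard {S | ∃ w ∈ Lang d, w.length = n ∧ S = Ext d w}

/-- The largest `k ≤ n` such that the `k`-letter prefix of `d` is a suffix of `v`
(`k = 0`, the empty prefix, always works). -/
def classIndex (d : ℕ → Fin m) (n : ℕ) (v : List (Fin m)) : ℕ :=
  Nat.findGreatest (fun k => prefixWord d k <:+ v) n

/-- Lexicographic comparison of (equal-length) words: `u = v`, or at the first
index where they differ, `u` takes the smaller value. -/
def WordLe [LinearOrder A] (u v : List A) : Prop :=
  u = v ∨ ∃ i, ∃ (hu : i < u.length) (hv : i < v.length),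
    (∀ j (hju : j < u.length) (hjv : j < v.length), j < i → u.get ⟨j, hju⟩ = v.get ⟨j, hjv⟩) ∧
    u.get ⟨i, hu⟩ < v.get ⟨i, hv⟩

end BetaShift

open BetaShift

/-!
A word lies in the language of `X_d` iff each of its suffixes is lexicographically at most the
prefix of `d` of the same length; the point `w 0^∞` then witnesses `w ∈ L(X_d)`. Hence
`s ∈ P(w)` iff `s` is in the language and, whenever the suffix of `s` of length `q` equals
`d_q`, `w` is at most the window `d[q, q + n)`. So `P(w)` only depends on which windows of `d`
dominate `w`, and replacing `w` by the least window dominating it does not change `P(w)`: every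
predecessor set is that of a word occurring in `d`. Conversely, if `u = d[k, k + n) < u'` then
`d_k` precedes `u` (since `σ^j d ⪯ d` for all `j`) but not `u'`.
-/

namespace List

variable {α : Type*} [LinearOrder α]

theorem cons_le_cons_iff' {a b : α} {l l' : List α} :
    a :: l ≤ b :: l' ↔ a < b ∨ a = b ∧ l ≤ l' := by
  rw [le_iff_lt_or_eq, le_iff_lt_or_eq, cons_lt_cons_iff, cons_eq_cons]
  tauto

theorem append_le_append_iff_of_length_eq {a b c e : List α} (h : a.length = c.length) :
    a ++ b ≤ c ++ e ↔ a < c ∨ a = c ∧ b ≤ e := by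
  induction a generalizing c with
  | nil =>
    obtain rfl := length_eq_zero_iff.1 h.symm
    simp
  | cons x a ih =>
    obtain ⟨y, c, rfl⟩ := exists_cons_of_length_eq_add_one h.symm
    rw [cons_append, cons_append, cons_le_cons_iff', ih (by simpa using h), cons_lt_cons_iff,
      cons_eq_cons]
    tauto

end List

namespace BetaShift

section Words

variable {α : Type*}

theorem shift_iterate_apply (x : ℕ → α) (i n : ℕ) : shift^[i] x n = x (i + n) := by
  induction i generalizing x with
  | zero => simp
  | succ i ih => rw [Function.iterate_succ_apply, ih, shift, add_right_comm]

@[simp]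
theorem length_prefixWord (x : ℕ → α) (n : ℕ) : (prefixWord x n).length = n := by
  simp [prefixWord]

theorem prefixWord_succ (x : ℕ → α) (n : ℕ) :
    prefixWord x (n + 1) = x 0 :: prefixWord (shift x) n := by
  simp [prefixWord, List.ofFn_succ, shift]

theorem prefixWord_add (x : ℕ → α) (a b : ℕ) :
    prefixWord x (a + b) = prefixWord x a ++ prefixWord (shift^[a] x) b := by
  simp [prefixWord, List.ofFn_add, shift_iterate_apply]

theorem drop_prefixWord (x : ℕ → α) (n i : ℕ) :
    (prefixWord x n).drop i = prefixWord (shift^[i] x) (n - i) := by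
  rcases le_total i n with h | h
  · rw [← Nat.add_sub_cancel' h, prefixWord_add, List.drop_left' (length_prefixWord x i),
      Nat.add_sub_cancel_left]
  · simp [List.drop_of_length_le, h, Nat.sub_eq_zero_of_le h, prefixWord]

theorem occurs_iff (w : List α) (x : ℕ → α) :
    Occurs w x ↔ ∃ p, prefixWord (shift^[p] x) w.length = w := by
  refine exists_congr fun p => ⟨fun h => ?_, fun h j => ?_⟩
  · exact List.ext_get (by simp) fun j _ hj => by
      simp [prefixWord, shift_iterate_apply, h ⟨j, hj⟩]
  · rw [List.get_eq_getElem, List.getElem_of_eq h.symm (by simp)]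
    simp [prefixWord, shift_iterate_apply]

theorem occurs_prefixWord_shift (x : ℕ → α) (k n : ℕ) :
    Occurs (prefixWord (shift^[k] x) n) x :=
  (occurs_iff _ _).2 ⟨k, by simp⟩

end Words

section SeqLe

variable {α : Type*} [LinearOrder α]

theorem seqLe_iff_shift {x y : ℕ → α} :
    SeqLe x y ↔ x 0 < y 0 ∨ x 0 = y 0 ∧ SeqLe (shift x) (shift y) := by
  constructor
  · rintro (rfl | ⟨_ | i, hlt, hi⟩)
    · exact Or.inr ⟨rfl, Or.inl rfl⟩
    · exact Or.inl hi
    · exact Or.inr ⟨hlt 0 i.succ_pos, Or.inr ⟨i, fun j hj => hlt (j + 1) (by omega), hi⟩⟩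
  · rintro (h | ⟨h0, h | ⟨i, hlt, hi⟩⟩)
    · exact Or.inr ⟨0, by simp, h⟩
    · left
      funext n
      cases n with
      | zero => exact h0
      | succ n => exact congrFun h n
    · refine Or.inr ⟨i + 1, fun j hj => ?_, hi⟩
      cases j with
      | zero => exact h0
      | succ j => exact hlt j (by omega)

theorem SeqLe.prefixWord_le {x y : ℕ → α} (h : SeqLe x y) (n : ℕ) :
    prefixWord x n ≤ prefixWord y n := by
  induction n generalizing x y with
  | zero => rfl
  | succ n ih =>
    rw [prefixWord_succ, prefixWord_succ, List.cons_le_cons_iff']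
    rcases seqLe_iff_shift.1 h with h | ⟨h0, h⟩
    · exact Or.inl h
    · exact Or.inr ⟨h0, ih h⟩

theorem seqLe_of_prefixWord_lt {x y : ℕ → α} {n : ℕ} (h : prefixWord x n < prefixWord y n) :
    SeqLe x y := by
  induction n generalizing x y with
  | zero => exact absurd h (lt_irrefl _)
  | succ n ih =>
    rw [prefixWord_succ, prefixWord_succ, List.cons_lt_cons_iff] at h
    rcases h with h | ⟨h0, h⟩
    · exact seqLe_iff_shift.2 (Or.inl h)
    · exact seqLe_iff_shift.2 (Or.inr ⟨h0, ih h⟩)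

theorem seqLe_iff_of_prefixWord_eq {x y : ℕ → α} {n : ℕ}
    (h : prefixWord x n = prefixWord y n) :
    SeqLe x y ↔ SeqLe (shift^[n] x) (shift^[n] y) := by
  induction n generalizing x y with
  | zero => rfl
  | succ n ih =>
    rw [prefixWord_succ, prefixWord_succ, List.cons_eq_cons] at h
    rw [seqLe_iff_shift, Function.iterate_succ_apply, Function.iterate_succ_apply, ← ih h.2]
    simp [h.1]

variable [OrderBot α]

theorem seqLe_const_bot (y : ℕ → α) : SeqLe (fun _ => ⊥) y := by
  classical
  by_cases h : ∃ i, y i ≠ ⊥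
  · exact Or.inr ⟨Nat.find h, fun j hj => (not_not.1 (Nat.find_min h hj)).symm,
      bot_lt_iff_ne_bot.2 (Nat.find_spec h)⟩
  · simp only [not_exists, not_not] at h
    exact Or.inl (funext fun i => (h i).symm)

def pad (w : List α) : ℕ → α := fun j => w.getD j ⊥

theorem prefixWord_pad (w : List α) : prefixWord (pad w) w.length = w :=
  List.ext_get (by simp) fun j _ hj => by simp [prefixWord, pad]

theorem shift_iterate_pad (w : List α) (i : ℕ) : shift^[i] (pad w) = pad (w.drop i) := by
  funext j
  simp [shift_iterate_apply, pad, List.getD_eq_getElem?_getD]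

theorem seqLe_pad_iff (w : List α) (y : ℕ → α) :
    SeqLe (pad w) y ↔ w ≤ prefixWord y w.length := by
  refine ⟨fun h => by simpa only [prefixWord_pad] using h.prefixWord_le w.length, fun h => ?_⟩
  rcases h.lt_or_eq with h | h
  · exact seqLe_of_prefixWord_lt (by rwa [prefixWord_pad])
  · rw [seqLe_iff_of_prefixWord_eq (by rwa [prefixWord_pad]), shift_iterate_pad, List.drop_length]
    exact seqLe_const_bot _

end SeqLe

section Language

variable {m : ℕ} [NeZero m] {d : ℕ → Fin m}

theorem mem_lang_iff {w : List (Fin m)} :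
    w ∈ Lang d ↔ ∀ i, w.drop i ≤ prefixWord d (w.length - i) := by
  constructor
  · rintro ⟨x, hx, hw⟩ i
    obtain ⟨p, hp⟩ := (occurs_iff w x).1 hw
    rw [← hp, drop_prefixWord, length_prefixWord, ← Function.iterate_add_apply]
    exact (hx _).prefixWord_le _
  · refine fun h => ⟨pad w, fun i => ?_, (occurs_iff w _).2 ⟨0, prefixWord_pad w⟩⟩
    rw [shift_iterate_pad, seqLe_pad_iff, List.length_drop]
    exact h i

theorem mem_pred_iff {w s : List (Fin m)} (hw : w ∈ Lang d) :
    s ∈ Pred d w ↔ s ∈ Lang d ∧ ∀ i, s.drop i = prefixWord d (s.length - i) →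
      w ≤ prefixWord (shift^[s.length - i] d) w.length := by
  have hw' := mem_lang_iff.1 hw
  have suffix_le_iff : ∀ i, (s ++ w).drop i ≤ prefixWord d ((s ++ w).length - i) ↔
      s.drop i ≤ prefixWord d (s.length - i) ∧ (s.drop i = prefixWord d (s.length - i) →
        w ≤ prefixWord (shift^[s.length - i] d) w.length) := by
    intro i
    rcases le_or_gt i s.length with hi | hi
    · rw [List.drop_append_of_le_length hi, List.length_append,
        show s.length + w.length - i = s.length - i + w.length by omega, prefixWord_add,
        List.append_le_append_iff_of_length_eq (by simp)]
      constructor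
      · rintro (h | ⟨h, h'⟩)
        · exact ⟨h.le, fun e => absurd e h.ne⟩
        · exact ⟨h.le, fun _ => h'⟩
      · rintro ⟨h, h'⟩
        rcases h.lt_or_eq with h | h
        · exact Or.inl h
        · exact Or.inr ⟨h, h' h⟩
    · rw [List.drop_append, List.drop_eq_nil_of_le hi.le, List.nil_append, List.length_append,
        show s.length + w.length - i = w.length - (i - s.length) by omega,
        show s.length - i = 0 by omega]
      exact iff_of_true (hw' _) ⟨le_rfl, fun _ => by simpa using hw' 0⟩
  change s ++ w ∈ Lang d ↔ _
  rw [mem_lang_iff, mem_lang_iff]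
  simp only [suffix_le_iff]
  exact forall_and

end Language

section Predecessors

variable {m : ℕ} {d : ℕ → Fin m}

theorem mem_lang_of_occurs (hd : ∀ i, SeqLe (shift^[i] d) d) {w : List (Fin m)}
    (h : Occurs w d) : w ∈ Lang d :=
  ⟨d, hd, h⟩

theorem prefixWord_shift_add_le (hd : ∀ i, SeqLe (shift^[i] d) d) {k q : ℕ}
    (h : prefixWord (shift^[k] d) q = prefixWord d q) (n : ℕ) :
    prefixWord (shift^[q + k] d) n ≤ prefixWord (shift^[q] d) n := by
  have hle := (hd k).prefixWord_le (q + n)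
  rw [prefixWord_add, prefixWord_add, h, ← Function.iterate_add_apply] at hle
  exact (((List.append_le_append_iff_of_length_eq rfl).1 hle).resolve_left (lt_irrefl _)).2

variable [NeZero m]

theorem prefixWord_mem_pred (hd : ∀ i, SeqLe (shift^[i] d) d) {w : List (Fin m)}
    (hw : w ∈ Lang d) {k : ℕ} (h : w ≤ prefixWord (shift^[k] d) w.length) :
    prefixWord d k ∈ Pred d w := by
  refine (mem_pred_iff hw).2
    ⟨mem_lang_of_occurs hd (occurs_prefixWord_shift d 0 k), fun i hi => ?_⟩
  rw [drop_prefixWord] at hi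
  simp only [length_prefixWord] at hi ⊢
  refine h.trans ?_
  rcases le_total i k with hik | hki
  · simpa [Nat.sub_add_cancel hik] using prefixWord_shift_add_le hd hi w.length
  · rw [Nat.sub_eq_zero_of_le hki]
    simpa using prefixWord_shift_add_le hd (k := k) (q := 0) rfl w.length

theorem pred_ne_of_lt (hd : ∀ i, SeqLe (shift^[i] d) d) {u u' : List (Fin m)}
    (hu : Occurs u d) (hu' : u' ∈ Lang d) (hlen : u'.length = u.length) (h : u < u') :
    Pred d u ≠ Pred d u' := by
  obtain ⟨k, hk⟩ := (occurs_iff u d).1 hu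
  intro heq
  have hmem := prefixWord_mem_pred hd (mem_lang_of_occurs hd hu) hk.ge
  rw [heq, mem_pred_iff hu'] at hmem
  have hle := hmem.2 0 (by simp)
  rw [length_prefixWord, Nat.sub_zero, hlen, hk] at hle
  exact hle.not_gt h

theorem injOn_pred (hd : ∀ i, SeqLe (shift^[i] d) d) (n : ℕ) :
    Set.InjOn (Pred d) {w | w.length = n ∧ Occurs w d} := by
  intro u ⟨hu, hud⟩ u' ⟨hu', hu'd⟩ heq
  by_contra hne
  rcases lt_or_gt_of_ne hne with h | h
  · exact pred_ne_of_lt hd hud (mem_lang_of_occurs hd hu'd) (hu'.trans hu.symm) h heq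
  · exact pred_ne_of_lt hd hu'd (mem_lang_of_occurs hd hud) (hu.trans hu'.symm) h heq.symm

theorem exists_occurs_pred_eq (hd : ∀ i, SeqLe (shift^[i] d) d) {w : List (Fin m)}
    (hw : w ∈ Lang d) : ∃ u, (u.length = w.length ∧ Occurs u d) ∧ Pred d u = Pred d w := by
  set V := {u : List (Fin m) | (u.length = w.length ∧ Occurs u d) ∧ w ≤ u}
  have window_mem : ∀ q, w ≤ prefixWord (shift^[q] d) w.length →
      prefixWord (shift^[q] d) w.length ∈ V :=
    fun q h => ⟨⟨length_prefixWord _ _, occurs_prefixWord_shift _ _ _⟩, h⟩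
  have hfin : V.Finite := (List.finite_length_eq (Fin m) w.length).subset fun u hu => hu.1.1
  have hne : V.Nonempty := ⟨_, window_mem 0 (by simpa using mem_lang_iff.1 hw 0)⟩
  obtain ⟨u, ⟨hu, hwu⟩, hmin⟩ := Set.exists_min_image V id hfin hne
  refine ⟨u, hu, ?_⟩
  -- `u` is the least window dominating `w`, so `u` and `w` are dominated by the same windows.
  have same_windows : ∀ q, u ≤ prefixWord (shift^[q] d) w.length ↔
      w ≤ prefixWord (shift^[q] d) w.length :=
    fun q => ⟨hwu.trans, fun h => hmin _ (window_mem q h)⟩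
  ext s
  rw [mem_pred_iff (mem_lang_of_occurs hd hu.2), mem_pred_iff hw, hu.1]
  simp only [same_windows]

theorem setOf_pred_eq_image (hd : ∀ i, SeqLe (shift^[i] d) d) (n : ℕ) :
    {S | ∃ w ∈ Lang d, w.length = n ∧ S = Pred d w} =
      Pred d '' {w | w.length = n ∧ Occurs w d} := by
  ext S
  constructor
  · rintro ⟨w, hw, rfl, rfl⟩
    exact exists_occurs_pred_eq hd hw
  · rintro ⟨u, ⟨rfl, hu⟩, rfl⟩
    exact ⟨u, mem_lang_of_occurs hd hu, rfl, rfl⟩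

end Predecessors

end BetaShift

theorem stmt9_general (m : ℕ) (d : ℕ → Fin m) (hd : Admissible d)
    (n : ℕ) :
    PredCount d n = Complexity d n := by
  have : NeZero m := NeZero.of_pos (d 0).pos
  rw [PredCount, Complexity, setOf_pred_eq_image hd.1, (injOn_pred hd.1 n).ncard_image]

/-- `|P(n)| = Φ_n(d)` for every `n ≥ 1`. -/
theorem stmt9 (m : ℕ) (hm : 1 ≤ m) (d : ℕ → Fin m) (hd : Admissible d)
    (n : ℕ) (hn : 1 ≤ n) :
    PredCount d n = Complexity d n :=
  stmt9_general m d hd n
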